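/- Let φ be a formula generated by the grammar φ ::= tt | ⟨a⟩φ | φ∧φ | φ∨φ, and let ⋁_{i=1}^k φ_i be the DNF of φ. Then φ is prime in L_S if and only if for every pair of indices 1 ≤ i, j ≤ k there is a process q such that q ≲_S p_{φ_i}, q ≲_S p_{φ_j}, and q ⊨ φ. -/

import Mathlib

/-- Finite, loop-free CCS processes over the action set `Act`:
`p ::= 0 | a.p | p + p`. -/
inductive Proc (Act : Type) : Type
  | nil : Proc Act
  | pre : Act → Proc Act → Proc Act
  | plus : Proc Act → Proc Act → Proc Act

/-- The transition relation: `a.p —a→ p`, and `p₁ + p₂ —a→ p'` iff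
`p₁ —a→ p'` or `p₂ —a→ p'`. -/
inductive Step {Act : Type} : Proc Act → Act → Proc Act → Prop
  | pre (a : Act) (p : Proc Act) : Step (Proc.pre a p) a p
  | plusL : ∀ {p₁ p₂ p' : Proc Act} {a : Act},
      Step p₁ a p' → Step (Proc.plus p₁ p₂) a p'
  | plusR : ∀ {p₁ p₂ p' : Proc Act} {a : Act},
      Step p₂ a p' → Step (Proc.plus p₁ p₂) a p'

/-- HML formulas in negation normal form:
`φ ::= tt | ff | φ∧φ | φ∨φ | ⟨a⟩φ | [a]φ`. -/
inductive HML (Act : Type) : Type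
  | tt : HML Act
  | ff : HML Act
  | conj : HML Act → HML Act → HML Act
  | disj : HML Act → HML Act → HML Act
  | dia : Act → HML Act → HML Act
  | box : Act → HML Act → HML Act

/-- The satisfaction relation `p ⊨ φ`. -/
def Sat {Act : Type} : Proc Act → HML Act → Prop
  | _, HML.tt => True
  | _, HML.ff => False
  | p, HML.conj φ ψ => Sat p φ ∧ Sat p ψ
  | p, HML.disj φ ψ => Sat p φ ∨ Sat p ψ
  | p, HML.dia a φ => ∃ p', Step p a p' ∧ Sat p' φ
  | p, HML.box a φ => ∀ p', Step p a p' → Sat p' φ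

/-- `φ` entails `ψ` iff every process satisfying `φ` satisfies `ψ`. -/
def Entails {Act : Type} (φ ψ : HML Act) : Prop :=
  ∀ p : Proc Act, Sat p φ → Sat p ψ

/-- `R` is a simulation relation. -/
def IsSimulation {Act : Type} (R : Proc Act → Proc Act → Prop) : Prop :=
  ∀ p q, R p q → ∀ a p', Step p a p' → ∃ q', Step q a q' ∧ R p' q'

/-- The simulation preorder `≲_S`: the largest simulation. -/
def Sim {Act : Type} (p q : Proc Act) : Prop :=
  ∃ R, IsSimulation R ∧ R p q

/-- The set `I(p)` of initial actions of a process. -/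
def initials {Act : Type} (p : Proc Act) : Set Act :=
  {a | ∃ p', Step p a p'}

/-- The fragment `L_S`: `φ ::= tt | ff | φ∧φ | φ∨φ | ⟨a⟩φ`. -/
inductive InLS {Act : Type} : HML Act → Prop
  | tt : InLS HML.tt
  | ff : InLS HML.ff
  | conj : ∀ {φ ψ : HML Act}, InLS φ → InLS ψ → InLS (HML.conj φ ψ)
  | disj : ∀ {φ ψ : HML Act}, InLS φ → InLS ψ → InLS (HML.disj φ ψ)
  | dia : ∀ {a : Act} {φ : HML Act}, InLS φ → InLS (HML.dia a φ)

/-- Formulas generated by the grammar `φ ::= tt | ⟨a⟩φ | φ∧φ | φ∨φ`. -/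
inductive InPos {Act : Type} : HML Act → Prop
  | tt : InPos HML.tt
  | dia : ∀ {a : Act} {φ : HML Act}, InPos φ → InPos (HML.dia a φ)
  | conj : ∀ {φ ψ : HML Act}, InPos φ → InPos ψ → InPos (HML.conj φ ψ)
  | disj : ∀ {φ ψ : HML Act}, InPos φ → InPos ψ → InPos (HML.disj φ ψ)

/-- The list of disjunction-free disjuncts of the disjunctive normal form,
obtained by rewriting `⟨a⟩(ψ₁∨ψ₂)` to `⟨a⟩ψ₁ ∨ ⟨a⟩ψ₂` and distributing
conjunctions over disjunctions. -/
def dnfList {Act : Type} : HML Act → List (HML Act)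
  | HML.tt => [HML.tt]
  | HML.ff => [HML.ff]
  | HML.conj φ ψ =>
      (dnfList φ).foldr (fun f acc => ((dnfList ψ).map (fun g => HML.conj f g)) ++ acc) []
  | HML.disj φ ψ => dnfList φ ++ dnfList ψ
  | HML.dia a φ => (dnfList φ).map (fun f => HML.dia a f)
  | HML.box a φ => [HML.box a φ]

/-- The process `p_φ` associated with a formula generated by
`φ ::= tt | ⟨a⟩φ | φ∧φ`: `p_tt = 0`, `p_{⟨a⟩φ'} = a.p_{φ'}`,
`p_{φ₁∧φ₂} = p_{φ₁} + p_{φ₂}`. -/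
def charProc {Act : Type} : HML Act → Proc Act
  | HML.dia a φ => Proc.pre a (charProc φ)
  | HML.conj φ ψ => Proc.plus (charProc φ) (charProc ψ)
  | _ => Proc.nil

/-- `φ` is prime in the fragment `L`: whenever `φ` entails a disjunction of
`L`-formulas, it entails one of the disjuncts. -/
def PrimeIn {Act : Type} (L : HML Act → Prop) (φ : HML Act) : Prop :=
  ∀ φ₁ φ₂ : HML Act, L φ₁ → L φ₂ → Entails φ (HML.disj φ₁ φ₂) →
    Entails φ φ₁ ∨ Entails φ φ₂


section Aux
variable {Act : Type}

lemma sim_step {p q p' : Proc Act} {a : Act} (h : Sim p q) (hs : Step p a p') :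
    ∃ q', Step q a q' ∧ Sim p' q' := by
  obtain ⟨R, hR, hpq⟩ := h
  obtain ⟨q', hq, h'⟩ := hR p q hpq a p' hs
  exact ⟨q', hq, R, hR, h'⟩

lemma sim_refl (p : Proc Act) : Sim p p :=
  ⟨Eq, fun p q hpq a p' hs => by subst hpq; exact ⟨p', hs, rfl⟩, rfl⟩

lemma sim_trans {p q r : Proc Act} (h₁ : Sim p q) (h₂ : Sim q r) : Sim p r := by
  refine ⟨fun x z => ∃ y, Sim x y ∧ Sim y z, ?_, q, h₁, h₂⟩
  rintro x z ⟨y, hxy, hyz⟩ a x' hs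
  obtain ⟨y', hy, hxy'⟩ := sim_step hxy hs
  obtain ⟨z', hz, hyz'⟩ := sim_step hyz hy
  exact ⟨z', hz, y', hxy', hyz'⟩

lemma sim_nil (p : Proc Act) : Sim Proc.nil p := by
  refine ⟨fun x _ => x = Proc.nil, ?_, rfl⟩
  rintro x y rfl a x' hs
  cases hs

lemma sim_pre {p q q' : Proc Act} {a : Act} (hq : Step q a q') (h : Sim p q') :
    Sim (Proc.pre a p) q := by
  refine ⟨fun x y => Sim x y ∨ (x = Proc.pre a p ∧ y = q), ?_, Or.inr ⟨rfl, rfl⟩⟩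
  rintro x y (hxy | ⟨rfl, rfl⟩) b x' hs
  · obtain ⟨y', hy, h'⟩ := sim_step hxy hs
    exact ⟨y', hy, Or.inl h'⟩
  · cases hs
    exact ⟨q', hq, Or.inl h⟩

lemma sim_plus {p p' q : Proc Act} (h₁ : Sim p q) (h₂ : Sim p' q) :
    Sim (Proc.plus p p') q := by
  refine ⟨fun x y => Sim x y ∨ (x = Proc.plus p p' ∧ y = q), ?_, Or.inr ⟨rfl, rfl⟩⟩
  rintro x y (hxy | ⟨rfl, rfl⟩) b x' hs
  · obtain ⟨y', hy, h'⟩ := sim_step hxy hs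
    exact ⟨y', hy, Or.inl h'⟩
  · cases hs with
    | plusL hs =>
        obtain ⟨y', hy, h'⟩ := sim_step h₁ hs
        exact ⟨y', hy, Or.inl h'⟩
    | plusR hs =>
        obtain ⟨y', hy, h'⟩ := sim_step h₂ hs
        exact ⟨y', hy, Or.inl h'⟩

lemma sim_plusL (p q : Proc Act) : Sim p (Proc.plus p q) := by
  refine ⟨fun x y => x = y ∨ (x = p ∧ y = Proc.plus p q), ?_, Or.inr ⟨rfl, rfl⟩⟩
  rintro x y (rfl | ⟨rfl, rfl⟩) b x' hs
  · exact ⟨x', hs, Or.inl rfl⟩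
  · exact ⟨x', Step.plusL hs, Or.inl rfl⟩

lemma sim_plusR (p q : Proc Act) : Sim q (Proc.plus p q) := by
  refine ⟨fun x y => x = y ∨ (x = q ∧ y = Proc.plus p q), ?_, Or.inr ⟨rfl, rfl⟩⟩
  rintro x y (rfl | ⟨rfl, rfl⟩) b x' hs
  · exact ⟨x', hs, Or.inl rfl⟩
  · exact ⟨x', Step.plusR hs, Or.inl rfl⟩

lemma sat_mono {φ : HML Act} (hφ : InLS φ) :
    ∀ {p q : Proc Act}, Sim p q → Sat p φ → Sat q φ := by
  induction hφ with
  | tt => intro p q _ _; trivial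
  | ff => intro p q _ hf; exact hf.elim
  | conj h₁ h₂ ih₁ ih₂ =>
      intro p q hsim hs
      exact ⟨ih₁ hsim hs.1, ih₂ hsim hs.2⟩
  | disj h₁ h₂ ih₁ ih₂ =>
      intro p q hsim hs
      exact hs.elim (fun hs => Or.inl (ih₁ hsim hs)) (fun hs => Or.inr (ih₂ hsim hs))
  | dia h ih =>
      rintro p q hsim ⟨p', hst, hs⟩
      obtain ⟨q', hq, h'⟩ := sim_step hsim hst
      exact ⟨q', hq, ih h' hs⟩

/-- Disjunction-free positive formulas. -/
inductive InDF : HML Act → Prop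
  | tt : InDF HML.tt
  | dia : ∀ {a : Act} {φ : HML Act}, InDF φ → InDF (HML.dia a φ)
  | conj : ∀ {φ ψ : HML Act}, InDF φ → InDF ψ → InDF (HML.conj φ ψ)

lemma indf_ls {ψ : HML Act} (h : InDF ψ) : InLS ψ := by
  induction h with
  | tt => exact InLS.tt
  | dia _ ih => exact InLS.dia ih
  | conj _ _ ih₁ ih₂ => exact InLS.conj ih₁ ih₂

lemma sat_charProc {ψ : HML Act} (h : InDF ψ) : Sat (charProc ψ) ψ := by
  induction h with
  | tt => trivial
  | dia _ ih => exact ⟨_, Step.pre _ _, ih⟩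
  | @conj φ₁ φ₂ h₁ h₂ ih₁ ih₂ =>
      exact ⟨sat_mono (indf_ls h₁) (sim_plusL _ _) ih₁,
             sat_mono (indf_ls h₂) (sim_plusR _ _) ih₂⟩

lemma char_iff {ψ : HML Act} (h : InDF ψ) (p : Proc Act) :
    Sat p ψ ↔ Sim (charProc ψ) p := by
  constructor
  · induction h generalizing p with
    | tt => intro _; exact sim_nil p
    | dia _ ih =>
        rintro ⟨p', hst, hs⟩
        exact sim_pre hst (ih p' hs)
    | conj _ _ ih₁ ih₂ =>
        rintro ⟨hs₁, hs₂⟩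
        exact sim_plus (ih₁ p hs₁) (ih₂ p hs₂)
  · intro hsim
    exact sat_mono (indf_ls h) hsim (sat_charProc h)

lemma mem_foldr_conj {ψ : HML Act} (l m : List (HML Act)) :
    ψ ∈ l.foldr (fun f acc => (m.map (fun g => HML.conj f g)) ++ acc) [] ↔
      ∃ f ∈ l, ∃ g ∈ m, ψ = HML.conj f g := by
  induction l with
  | nil => simp
  | cons f l ih =>
      constructor
      · intro hmem
        rw [List.foldr_cons] at hmem
        rcases List.mem_append.1 hmem with hm | hm
        · obtain ⟨g, hg, rfl⟩ := List.mem_map.1 hm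
          exact ⟨f, List.mem_cons_self, g, hg, rfl⟩
        · obtain ⟨f', hf', g, hg, rfl⟩ := ih.1 hm
          exact ⟨f', List.mem_cons_of_mem _ hf', g, hg, rfl⟩
      · rintro ⟨f', hf', g, hg, rfl⟩
        rw [List.foldr_cons]
        rcases List.mem_cons.1 hf' with heq | hf'
        · subst heq
          exact List.mem_append.2 (Or.inl (List.mem_map.2 ⟨g, hg, rfl⟩))
        · exact List.mem_append.2 (Or.inr (ih.2 ⟨f', hf', g, hg, rfl⟩))

lemma mem_dnf_conj {ψ φ₁ φ₂ : HML Act} :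
    ψ ∈ dnfList (HML.conj φ₁ φ₂) ↔
      ∃ f ∈ dnfList φ₁, ∃ g ∈ dnfList φ₂, ψ = HML.conj f g :=
  mem_foldr_conj _ _

lemma dnf_df {φ : HML Act} (h : InPos φ) : ∀ ψ ∈ dnfList φ, InDF ψ := by
  induction h with
  | tt => intro ψ hψ; simp [dnfList] at hψ; subst hψ; exact InDF.tt
  | dia _ ih =>
      intro ψ hψ
      simp only [dnfList, List.mem_map] at hψ
      obtain ⟨f, hf, rfl⟩ := hψ
      exact InDF.dia (ih f hf)
  | conj _ _ ih₁ ih₂ =>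
      intro ψ hψ
      rw [mem_dnf_conj] at hψ
      obtain ⟨f, hf, g, hg, rfl⟩ := hψ
      exact InDF.conj (ih₁ f hf) (ih₂ g hg)
  | disj _ _ ih₁ ih₂ =>
      intro ψ hψ
      simp only [dnfList, List.mem_append] at hψ
      exact hψ.elim (ih₁ ψ) (ih₂ ψ)

lemma dnf_ne {φ : HML Act} (h : InPos φ) : dnfList φ ≠ [] := by
  induction h with
  | tt => simp [dnfList]
  | dia _ ih => simpa [dnfList] using ih
  | conj h₁ h₂ ih₁ ih₂ =>
      intro hc
      obtain ⟨f, hf⟩ := List.exists_mem_of_ne_nil _ ih₁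
      obtain ⟨g, hg⟩ := List.exists_mem_of_ne_nil _ ih₂
      have : HML.conj f g ∈ dnfList (HML.conj _ _) :=
        mem_dnf_conj.2 ⟨f, hf, g, hg, rfl⟩
      rw [hc] at this
      cases this
  | disj _ _ ih₁ ih₂ => simp [dnfList, ih₁]

lemma sat_dnf {φ : HML Act} (h : InPos φ) (p : Proc Act) :
    Sat p φ ↔ ∃ ψ ∈ dnfList φ, Sat p ψ := by
  induction h generalizing p with
  | tt => simp [dnfList, Sat]
  | dia a ih =>
      constructor
      · rintro ⟨p', hst, hs⟩
        obtain ⟨ψ, hψ, hsψ⟩ := (ih p').1 hs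
        exact ⟨_, List.mem_map.2 ⟨ψ, hψ, rfl⟩, p', hst, hsψ⟩
      · rintro ⟨ψ', hψ', hsψ'⟩
        obtain ⟨ψ, hψ, rfl⟩ := List.mem_map.1 hψ'
        obtain ⟨p', hst, hs⟩ := hsψ'
        exact ⟨p', hst, (ih p').2 ⟨ψ, hψ, hs⟩⟩
  | conj _ _ ih₁ ih₂ =>
      constructor
      · rintro ⟨hs₁, hs₂⟩
        obtain ⟨f, hf, hsf⟩ := (ih₁ p).1 hs₁
        obtain ⟨g, hg, hsg⟩ := (ih₂ p).1 hs₂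
        exact ⟨HML.conj f g, mem_dnf_conj.2 ⟨f, hf, g, hg, rfl⟩, hsf, hsg⟩
      · rintro ⟨ψ, hψ, hsψ⟩
        obtain ⟨f, hf, g, hg, rfl⟩ := mem_dnf_conj.1 hψ
        exact ⟨(ih₁ p).2 ⟨f, hf, hsψ.1⟩, (ih₂ p).2 ⟨g, hg, hsψ.2⟩⟩
  | disj _ _ ih₁ ih₂ =>
      constructor
      · rintro (hs | hs)
        · obtain ⟨ψ, hψ, hsψ⟩ := (ih₁ p).1 hs
          exact ⟨ψ, List.mem_append.2 (Or.inl hψ), hsψ⟩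
        · obtain ⟨ψ, hψ, hsψ⟩ := (ih₂ p).1 hs
          exact ⟨ψ, List.mem_append.2 (Or.inr hψ), hsψ⟩
      · rintro ⟨ψ, hψ, hsψ⟩
        rcases List.mem_append.1 hψ with hψ | hψ
        · exact Or.inl ((ih₁ p).2 ⟨ψ, hψ, hsψ⟩)
        · exact Or.inr ((ih₂ p).2 ⟨ψ, hψ, hsψ⟩)

/-- Big disjunction of a list of formulas. -/
def bigDisj : List (HML Act) → HML Act
  | [] => HML.ff
  | ψ :: l => HML.disj ψ (bigDisj l)

lemma sat_bigDisj (p : Proc Act) (l : List (HML Act)) :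
    Sat p (bigDisj l) ↔ ∃ ψ ∈ l, Sat p ψ := by
  induction l with
  | nil => simp [bigDisj, Sat]
  | cons ψ l ih => simp [bigDisj, Sat, ih]

lemma ls_bigDisj (l : List (HML Act)) (h : ∀ ψ ∈ l, InLS ψ) : InLS (bigDisj l) := by
  induction l with
  | nil => exact InLS.ff
  | cons ψ l ih =>
      exact InLS.disj (h ψ (List.mem_cons_self)) (ih fun ψ hψ => h ψ (List.mem_cons_of_mem _ hψ))

lemma prime_list {φ : HML Act} (hp : PrimeIn InLS φ) (l : List (HML Act))
    (hl : ∀ ψ ∈ l, InLS ψ) (he : Entails φ (bigDisj l)) :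
    (∃ ψ ∈ l, Entails φ ψ) ∨ Entails φ HML.ff := by
  induction l with
  | nil => exact Or.inr he
  | cons ψ l ih =>
      rcases hp ψ (bigDisj l) (hl ψ (List.mem_cons_self))
        (ls_bigDisj l fun ψ hψ => hl ψ (List.mem_cons_of_mem _ hψ)) he with h | h
      · exact Or.inl ⟨ψ, List.mem_cons_self, h⟩
      · rcases ih (fun ψ hψ => hl ψ (List.mem_cons_of_mem _ hψ)) h with ⟨ψ', hψ', h'⟩ | h'
        · exact Or.inl ⟨ψ', List.mem_cons_of_mem _ hψ', h'⟩
        · exact Or.inr h'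

end Aux

/-- Let `φ` be generated by `φ ::= tt | ⟨a⟩φ | φ∧φ | φ∨φ` with DNF
`⋁_{i=1}^k φ_i`. Then `φ` is prime in `L_S` iff for every pair `i, j` there is
a process `q` with `q ≲_S p_{φ_i}`, `q ≲_S p_{φ_j}` and `q ⊨ φ`. -/
theorem prime_iff_pairs_lower_bound {Act : Type} [Fintype Act] [Nonempty Act]
    (φ : HML Act) (h : InPos φ) :
    PrimeIn InLS φ ↔
      ∀ ψ₁ ∈ dnfList φ, ∀ ψ₂ ∈ dnfList φ,
        ∃ q : Proc Act, Sim q (charProc ψ₁) ∧ Sim q (charProc ψ₂) ∧ Sat q φ := by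
  constructor
  · -- primality implies pairwise lower bounds
    intro hp ψ₁ h₁ ψ₂ h₂
    have he : Entails φ (bigDisj (dnfList φ)) := fun p hs =>
      (sat_bigDisj p _).2 ((sat_dnf h p).1 hs)
    have hsat1 : Sat (charProc ψ₁) φ :=
      (sat_dnf h _).2 ⟨ψ₁, h₁, sat_charProc (dnf_df h ψ₁ h₁)⟩
    rcases prime_list hp (dnfList φ) (fun ψ hψ => indf_ls (dnf_df h ψ hψ)) he with
      ⟨ψ₀, hmem, hent⟩ | hff
    · refine ⟨charProc ψ₀, ?_, ?_, ?_⟩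
      · exact (char_iff (dnf_df h ψ₀ hmem) _).1 (hent _ hsat1)
      · have hsat2 : Sat (charProc ψ₂) φ :=
          (sat_dnf h _).2 ⟨ψ₂, h₂, sat_charProc (dnf_df h ψ₂ h₂)⟩
        exact (char_iff (dnf_df h ψ₀ hmem) _).1 (hent _ hsat2)
      · exact (sat_dnf h _).2 ⟨ψ₀, hmem, sat_charProc (dnf_df h ψ₀ hmem)⟩
    · exact (hff _ hsat1).elim
  · -- pairwise lower bounds imply primality
    intro hpairs φ₁ φ₂ hL1 hL2 hent
    by_contra hc
    push_neg at hc
    obtain ⟨hn1, hn2⟩ := hc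
    simp only [Entails, not_forall] at hn1 hn2
    obtain ⟨p₁, hp₁, hnp₁⟩ := hn1
    obtain ⟨p₂, hp₂, hnp₂⟩ := hn2
    obtain ⟨ψ₁, hψ₁, hs₁⟩ := (sat_dnf h p₁).1 hp₁
    obtain ⟨ψ₂, hψ₂, hs₂⟩ := (sat_dnf h p₂).1 hp₂
    obtain ⟨q, hq₁, hq₂, hqφ⟩ := hpairs ψ₁ hψ₁ ψ₂ hψ₂
    have hqp₁ : Sim q p₁ :=
      sim_trans hq₁ ((char_iff (dnf_df h ψ₁ hψ₁) p₁).1 hs₁)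
    have hqp₂ : Sim q p₂ :=
      sim_trans hq₂ ((char_iff (dnf_df h ψ₂ hψ₂) p₂).1 hs₂)
    rcases hent q hqφ with hq | hq
    · exact hnp₁ (sat_mono hL1 hqp₁ hq)
    · exact hnp₂ (sat_mono hL2 hqp₂ hq)
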